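/- Let r > 0, w > 0, γ > 0, u, v ∈ ℝ^n with ‖u‖₂ = r and v ≠ 0, and set a = γ(w/r³)uᵀv + w/r, b = −(3γw/r⁵ uᵀv + w/r³), c = γw/r³. Then the product of the two extreme eigenvalues of aI + buuᵀ + c(uvᵀ+vuᵀ) satisfies λ₁λ₃ = (γ²w²/r⁶)‖u‖₂²‖v‖₂²(ρ² − 1) ≤ 0, where ρ = uᵀv/(‖u‖₂‖v‖₂); hence λ₁λ₃ < 0 (the matrix is indefinite on span{u,v}) unless ρ = ±1. -/

import Mathlib

/-! As a difference of squares, `λ₁λ₃ = ((2a + b r² + 2c uᵀv)² − Δ) / 4`, which for any `a, b, c`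
equals `a (a + b r² + 2c uᵀv) + c² ((uᵀv)² − r²‖v‖²)`; the square root is real because
`Δ ≥ 0` by Cauchy–Schwarz and `‖u‖ = r`. The particular `a, b, c` make `a + b r² + 2c uᵀv`
vanish, leaving `c² ‖u‖² ‖v‖² (ρ² − 1)`, which is `≤ 0` by Cauchy–Schwarz again and `< 0` as
soon as `v ≠ 0` and `ρ ≠ ±1`. -/

open BigOperators

/-- Euclidean norm of a vector in `ℝ^n`. -/
noncomputable def enorm {n : ℕ} (v : Fin n → ℝ) : ℝ := Real.sqrt (∑ i, v i ^ 2)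

/-- Euclidean dot product. -/
def dot {n : ℕ} (u v : Fin n → ℝ) : ℝ := ∑ i, u i * v i

/-- Discriminant of the rank-two perturbation `aI + buuᵀ + c(uvᵀ + vuᵀ)` with `‖u‖ = r`. -/
noncomputable def Delta {n : ℕ} (b c r : ℝ) (u v : Fin n → ℝ) : ℝ :=
  4 * c ^ 2 * r ^ 2 * (_root_.enorm v) ^ 2 + b ^ 2 * r ^ 4 + 4 * b * c * r ^ 2 * dot u v

/-- Extreme eigenvalue `λ₁`. -/
noncomputable def lam1 {n : ℕ} (a b c r : ℝ) (u v : Fin n → ℝ) : ℝ :=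
  (2 * a + b * r ^ 2 + 2 * c * dot u v) / 2 + Real.sqrt (Delta b c r u v) / 2

/-- Extreme eigenvalue `λ₃`. -/
noncomputable def lam3 {n : ℕ} (a b c r : ℝ) (u v : Fin n → ℝ) : ℝ :=
  (2 * a + b * r ^ 2 + 2 * c * dot u v) / 2 - Real.sqrt (Delta b c r u v) / 2

lemma enorm_sq_eq_sum {n : ℕ} (v : Fin n → ℝ) : _root_.enorm v ^ 2 = ∑ i, v i ^ 2 :=
  Real.sq_sqrt (Finset.sum_nonneg fun _ _ => sq_nonneg _)

lemma enorm_pos_of_ne_zero {n : ℕ} {v : Fin n → ℝ} (hv : v ≠ 0) : 0 < _root_.enorm v := by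
  obtain ⟨i, hi⟩ := Function.ne_iff.mp hv
  exact Real.sqrt_pos.mpr
    (Finset.sum_pos' (fun _ _ => sq_nonneg _) ⟨i, Finset.mem_univ i, pow_two_pos_of_ne_zero hi⟩)

lemma dot_sq_le {n : ℕ} (u v : Fin n → ℝ) :
    dot u v ^ 2 ≤ _root_.enorm u ^ 2 * _root_.enorm v ^ 2 := by
  rw [enorm_sq_eq_sum, enorm_sq_eq_sum]
  exact Finset.sum_mul_sq_le_sq_mul_sq Finset.univ u v

noncomputable def cosAngle {n : ℕ} (u v : Fin n → ℝ) : ℝ :=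
  dot u v / (_root_.enorm u * _root_.enorm v)

lemma cosAngle_sq_le_one {n : ℕ} (u v : Fin n → ℝ) : cosAngle u v ^ 2 ≤ 1 := by
  rw [cosAngle, div_pow, mul_pow]
  exact div_le_one_of_le₀ (dot_sq_le u v) (by positivity)

-- When `‖u‖‖v‖ = 0` the junk value `ρ = 0` is harmless: Cauchy–Schwarz forces `uᵀv = 0`.
lemma enorm_sq_mul_enorm_sq_mul_cosAngle_sq {n : ℕ} (u v : Fin n → ℝ) :
    _root_.enorm u ^ 2 * _root_.enorm v ^ 2 * cosAngle u v ^ 2 = dot u v ^ 2 := by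
  rw [cosAngle, div_pow, ← mul_pow, mul_div_assoc']
  by_cases h : _root_.enorm u * _root_.enorm v = 0
  · have hdot : dot u v ^ 2 ≤ 0 := by simpa [← mul_pow, h] using dot_sq_le u v
    rw [h, zero_pow two_ne_zero, zero_mul, zero_div]
    exact le_antisymm (sq_nonneg _) hdot
  · exact mul_div_cancel_left₀ _ (pow_ne_zero 2 h)

lemma Delta_nonneg {n : ℕ} (b c r : ℝ) {u v : Fin n → ℝ} (hu : _root_.enorm u = r) :
    0 ≤ Delta b c r u v := by
  have hCS := dot_sq_le u v
  rw [hu] at hCS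
  have hsq : Delta b c r u v =
      (b * r ^ 2 + 2 * c * dot u v) ^ 2 + 4 * c ^ 2 * (r ^ 2 * _root_.enorm v ^ 2 - dot u v ^ 2) := by
    rw [Delta]; ring
  rw [hsq]
  have : 0 ≤ r ^ 2 * _root_.enorm v ^ 2 - dot u v ^ 2 := by linarith
  positivity

lemma lam1_mul_lam3 {n : ℕ} (a b c r : ℝ) (u v : Fin n → ℝ) (hΔ : 0 ≤ Delta b c r u v) :
    lam1 a b c r u v * lam3 a b c r u v =
      a * (a + b * r ^ 2 + 2 * c * dot u v) + c ^ 2 * (dot u v ^ 2 - r ^ 2 * _root_.enorm v ^ 2) := by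
  have hsqrt := Real.sq_sqrt hΔ
  rw [lam1, lam3]
  rw [Delta] at hsqrt ⊢
  linear_combination (-1 / 4 : ℝ) * hsqrt

/-- Product of the two extreme eigenvalues of the rank-two perturbation:
`λ₁λ₃ = (γ²w²/r⁶)‖u‖²‖v‖²(ρ² − 1) ≤ 0` with `ρ = uᵀv/(‖u‖‖v‖)`, and `λ₁λ₃ < 0`
(the matrix is indefinite on `span{u,v}`) unless `ρ = ±1`. -/
theorem stmt8 {n : ℕ} (r w γ : ℝ) (hr : 0 < r) (hw : 0 < w) (hγ : 0 < γ)
    (u v : Fin n → ℝ) (hu : _root_.enorm u = r) (hv : v ≠ 0)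
    (a b c ρ : ℝ)
    (hA : a = γ * (w / r ^ 3) * dot u v + w / r)
    (hB : b = -(3 * γ * w / r ^ 5 * dot u v + w / r ^ 3))
    (hC : c = γ * w / r ^ 3)
    (hρ : ρ = dot u v / (_root_.enorm u * _root_.enorm v)) :
    lam1 a b c r u v * lam3 a b c r u v =
      γ ^ 2 * w ^ 2 / r ^ 6 * (_root_.enorm u) ^ 2 * (_root_.enorm v) ^ 2 * (ρ ^ 2 - 1) ∧
    lam1 a b c r u v * lam3 a b c r u v ≤ 0 ∧
    (ρ ≠ 1 → ρ ≠ -1 → lam1 a b c r u v * lam3 a b c r u v < 0) := by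
  have hcoeff : a + b * r ^ 2 + 2 * c * dot u v = 0 := by
    subst hA hB hC
    field_simp
    ring
  have hprod : lam1 a b c r u v * lam3 a b c r u v =
      c ^ 2 * _root_.enorm u ^ 2 * _root_.enorm v ^ 2 * (ρ ^ 2 - 1) := by
    rw [lam1_mul_lam3 a b c r u v (Delta_nonneg b c r hu), hcoeff, hρ,
      ← enorm_sq_mul_enorm_sq_mul_cosAngle_sq u v, cosAngle, hu]
    ring
  have hc : c ^ 2 = γ ^ 2 * w ^ 2 / r ^ 6 := by rw [hC]; ring
  have hρ_sq_le : ρ ^ 2 ≤ 1 := hρ ▸ cosAngle_sq_le_one u v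
  have hscale : 0 < c ^ 2 * _root_.enorm u ^ 2 * _root_.enorm v ^ 2 := by
    rw [hc, hu]
    have hv_pos := enorm_pos_of_ne_zero hv
    positivity
  refine ⟨hc ▸ hprod, hprod ▸ mul_nonpos_of_nonneg_of_nonpos hscale.le (by linarith), ?_⟩
  intro hρ_one hρ_neg_one
  have hρ_sq_lt : ρ ^ 2 < 1 :=
    hρ_sq_le.lt_of_ne fun h => (sq_eq_one_iff.mp h).elim hρ_one hρ_neg_one
  rw [hprod]
  exact mul_neg_of_pos_of_neg hscale (by linarith)
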